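/- Let $\mu_r$ act faithfully on a finite-dimensional complex vector space $V$ with eigenweights $a_i \in \{0, 1, \dots, r-1\}$ on eigenspaces $V_i$, and suppose $V \cong V^*$ as $\mu_r$-representations. If a subgroup $I \supseteq \mu_r$ of $GL(V)$, abelian, cyclic of order $r_g$ (a multiple of $r$), acts on $V$ such that each nonzero weight of the $I$-action lies in the open interval $(0, r)$ when weights are normalized to lie in $[0, r_g)$, then $r_g = r$. -/
import Mathlib


open Finset

/-- Core of Lemma `r=r.g`: suppose a cyclic group of order `s = r_g` (a multiple of
`r`) acts faithfully on a vector space with normalized weights `b j ∈ [0, s)` (one per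
coordinate, `j` ranging over a basis indexed by `ι`), such that the representation is
self-dual (the multiplicity of each nonzero weight `c` equals that of `s - c`), and
every nonzero weight lies in the open interval `(0, r)`. Then `s = r`.
Faithfulness is expressed as `gcd(s, b₁, b₂, ...) = 1`. -/
theorem stmt_14 {ι : Type*} [Fintype ι] (r s : ℕ) (hs : 0 < s) (hrs : r ∣ s)
    (b : ι → ℕ) (hb : ∀ j, b j < s)
    (hfaith : Nat.gcd s (Finset.univ.gcd b) = 1)
    (hdual : ∀ c : ℕ, 0 < c → c < s →
      (Finset.univ.filter fun j => b j = c).card =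
        (Finset.univ.filter fun j => b j = s - c).card)
    (hsmall : ∀ j, b j ≠ 0 → b j < r) :
    s = r := by
  have hr : 0 < r := by
    rcases Nat.eq_zero_or_pos r with h | h
    · subst h; simp at hrs; omega
    · exact h
  by_cases hall : ∀ j, b j = 0
  · have : Finset.univ.gcd b = 0 := Finset.gcd_eq_zero_iff.mpr fun j _ => hall j
    rw [this, Nat.gcd_zero_right] at hfaith
    have := Nat.le_of_dvd one_pos (hfaith ▸ hrs)
    omega
  · push_neg at hall
    obtain ⟨j, hj⟩ := hall
    by_contra hne
    obtain ⟨k, hk⟩ := hrs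
    have hk2 : 2 ≤ k := by
      rcases k with _ | _ | k <;> omega
    have hc1 : 0 < b j := Nat.pos_of_ne_zero hj
    have hc2 : b j < r := hsmall j hj
    have hcard : 0 < (Finset.univ.filter fun i => b i = b j).card := by
      refine Finset.card_pos.mpr ⟨j, ?_⟩
      simp
    rw [hdual (b j) hc1 (hb j)] at hcard
    obtain ⟨j', hj'⟩ := Finset.card_pos.mp hcard
    simp only [Finset.mem_filter] at hj'
    have h1 : b j' = s - b j := hj'.2
    have hsr : 2 * r ≤ s := by
      have := Nat.mul_le_mul_left r hk2
      omega
    have h2 : b j' < r := hsmall j' (by omega)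
    omega
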